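/- arXiv:1911.11617 — 2 statements merged into one kernel-verified Lean document; each statement's English description precedes it below -/
import Mathlib

section
/- Let X and Y be T0 spaces and f : X → Y a continuous map. If A ⊆ X is a Rudin set, then the closure of f(A) in Y is a Rudin set. -/
open Set

universe u

variable {α : Type u}

/-- The specialization order used in the paper: `x ≤ y` iff `x ∈ closure {y}`. -/
def specLE [TopologicalSpace α] (x y : α) : Prop := x ∈ closure ({y} : Set α)

/-- `↑x = {y | x ≤ y}` in the specialization order. -/
def upOf [TopologicalSpace α] (x : α) : Set α := {y | specLE x y}

/-- `↑F = {y | ∃ a ∈ F, a ≤ y}` in the specialization order. -/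
def upSetOf [TopologicalSpace α] (F : Set α) : Set α := {y | ∃ a ∈ F, specLE a y}

/-- `↓B = {x | ∃ b ∈ B, x ≤ b}` in the specialization order. -/
def downOf [TopologicalSpace α] (B : Set α) : Set α := {x | ∃ b ∈ B, specLE x b}

/-- A set directed with respect to the specialization order: nonempty, and any two
elements have an upper bound in it. -/
def SDirected [TopologicalSpace α] (D : Set α) : Prop :=
  D.Nonempty ∧ ∀ a ∈ D, ∀ b ∈ D, ∃ c ∈ D, specLE a c ∧ specLE b c

/-- `s` is a supremum (least upper bound) of `D` in the specialization order. -/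
def SIsSup [TopologicalSpace α] (D : Set α) (s : α) : Prop :=
  (∀ d ∈ D, specLE d s) ∧ ∀ t : α, (∀ d ∈ D, specLE d t) → specLE s t

/-- Upper set (= saturated set) in the specialization order. -/
def SUpper [TopologicalSpace α] (A : Set α) : Prop :=
  ∀ ⦃x y : α⦄, x ∈ A → specLE x y → y ∈ A

/-- Scott open set with respect to the specialization order. -/
def SScottOpen [TopologicalSpace α] (U : Set α) : Prop :=
  SUpper U ∧ ∀ D : Set α, SDirected D → ∀ s : α, SIsSup D s → s ∈ U → (D ∩ U).Nonempty

/-- A d-space: a dcpo under the specialization order, all open sets Scott open. -/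
def IsDSpace (α : Type u) [TopologicalSpace α] : Prop :=
  (∀ D : Set α, SDirected D → ∃ s : α, SIsSup D s) ∧
    ∀ U : Set α, IsOpen U → SScottOpen U

/-- Member of `K(X)`: nonempty, compact and saturated. -/
def IsKSet [TopologicalSpace α] (K : Set α) : Prop :=
  K.Nonempty ∧ IsCompact K ∧ SUpper K

/-- A filtered family of sets: nonempty, and any two members contain a common member. -/
def FilteredFam (𝒦 : Set (Set α)) : Prop :=
  𝒦.Nonempty ∧ ∀ K1 ∈ 𝒦, ∀ K2 ∈ 𝒦, ∃ K3 ∈ 𝒦, K3 ⊆ K1 ∩ K2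

/-- Well-filtered space: for every filtered family of nonempty compact saturated sets whose
intersection is contained in an open `U`, some member is contained in `U`. -/
def IsWellFiltered (α : Type u) [TopologicalSpace α] : Prop :=
  ∀ 𝒦 : Set (Set α), (∀ K ∈ 𝒦, IsKSet K) → FilteredFam 𝒦 →
    ∀ U : Set α, IsOpen U → ⋂₀ 𝒦 ⊆ U → ∃ K ∈ 𝒦, K ⊆ U

/-- Rudin set: a nonempty set `A` such that for some filtered family `𝒦 ⊆ K(X)`,
`closure A` is a minimal closed set meeting every member of `𝒦`. -/
def IsRudin [TopologicalSpace α] (A : Set α) : Prop :=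
  A.Nonempty ∧ ∃ 𝒦 : Set (Set α), (∀ K ∈ 𝒦, IsKSet K) ∧ FilteredFam 𝒦 ∧
    (∀ K ∈ 𝒦, (closure A ∩ K).Nonempty) ∧
    ∀ B : Set α, IsClosed B → B ⊆ closure A → (∀ K ∈ 𝒦, (B ∩ K).Nonempty) → B = closure A

/-- Well-filtered determined set: every continuous map into a well-filtered T0 space sends it
to a set whose closure is the closure of a unique point. -/
def IsWFD [TopologicalSpace α] (A : Set α) : Prop :=
  ∀ (Y : Type u) [TopologicalSpace Y] [T0Space Y], IsWellFiltered Y →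
    ∀ f : α → Y, Continuous f → ∃! y : Y, closure (f '' A) = closure ({y} : Set Y)

/-- Irreducible set. -/
def IsIrred [TopologicalSpace α] (A : Set α) : Prop :=
  A.Nonempty ∧ ∀ F1 F2 : Set α, IsClosed F1 → IsClosed F2 → A ⊆ F1 ∪ F2 → A ⊆ F1 ∨ A ⊆ F2

/-- Sober space: every irreducible closed set is the closure of a unique point. -/
def IsSober (α : Type u) [TopologicalSpace α] : Prop :=
  ∀ A : Set α, IsClosed A → IsIrred A → ∃! x : α, A = closure ({x} : Set α)

/-- `A` has a maximal element with respect to the specialization order. -/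
def HasMaxElem [TopologicalSpace α] (A : Set α) : Prop :=
  ∃ m ∈ A, ∀ a ∈ A, specLE m a → a = m

/-- Strong d-space. -/
def IsStrongDSpace (α : Type u) [TopologicalSpace α] : Prop :=
  ∀ D : Set α, SDirected D → ∀ x : α, ∀ U : Set α, IsOpen U →
    (⋂ d ∈ D, upOf d) ∩ upOf x ⊆ U → ∃ d ∈ D, upOf d ∩ upOf x ⊆ U

/-! The Rudin family of `closure (f '' A)` is obtained by pushing the family `𝒦` of `A` forward:
`K ↦ nhdsKer (f '' (K ∩ closure A))`, the saturation of a compact set, which is again compact.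
Closed sets are lower sets for the specialization order, so a closed set meets this saturation
iff it meets `f '' (K ∩ closure A)`. Hence if a closed `B ⊆ closure (f '' A)` meets every member
of the new family, then `f ⁻¹' B ∩ closure A` is a closed subset of `closure A` meeting every
`K ∈ 𝒦`; by minimality it is all of `closure A`, so `f '' A ⊆ B`. -/

section Rudin

variable {β : Type u}

lemma FilteredFam.image {𝒦 : Set (Set α)} (h𝒦 : FilteredFam 𝒦) {g : Set α → Set β}
    (hg : Monotone g) : FilteredFam (g '' 𝒦) := by
  refine ⟨h𝒦.1.image g, ?_⟩
  rintro _ ⟨K₁, hK₁, rfl⟩ _ ⟨K₂, hK₂, rfl⟩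
  obtain ⟨K₃, hK₃, hsub⟩ := h𝒦.2 K₁ hK₁ K₂ hK₂
  exact ⟨g K₃, mem_image_of_mem g hK₃,
    subset_inter (hg (hsub.trans inter_subset_left)) (hg (hsub.trans inter_subset_right))⟩

variable [TopologicalSpace α] [TopologicalSpace β]

lemma specLE_iff_specializes {x y : α} : specLE x y ↔ y ⤳ x :=
  specializes_iff_mem_closure.symm

lemma sUpper_nhdsKer (S : Set α) : SUpper (nhdsKer S) := by
  intro x y hx hxy
  obtain ⟨z, hzS, hxz⟩ := mem_nhdsKer_iff_specializes.1 hx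
  exact mem_nhdsKer_iff_specializes.2 ⟨z, hzS, (specLE_iff_specializes.1 hxy).trans hxz⟩

lemma isKSet_nhdsKer {S : Set α} (hne : S.Nonempty) (hS : IsCompact S) :
    IsKSet (nhdsKer S) :=
  ⟨hne.mono subset_nhdsKer, hS.nhdsKer, sUpper_nhdsKer S⟩

lemma IsClosed.inter_nhdsKer_nonempty_iff {B S : Set α} (hB : IsClosed B) :
    (B ∩ nhdsKer S).Nonempty ↔ (B ∩ S).Nonempty := by
  refine ⟨?_, fun h => h.mono (inter_subset_inter_right B subset_nhdsKer)⟩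
  rintro ⟨x, hxB, hx⟩
  obtain ⟨y, hyS, hxy⟩ := mem_nhdsKer_iff_specializes.1 hx
  exact ⟨y, hxy.mem_closed hB hxB, hyS⟩

lemma closure_subset_preimage_of_minimal {f : α → β} (hf : Continuous f) {A : Set α}
    {𝒦 : Set (Set α)}
    (hmin : ∀ C : Set α, IsClosed C → C ⊆ closure A → (∀ K ∈ 𝒦, (C ∩ K).Nonempty) →
      C = closure A)
    {B : Set β} (hB : IsClosed B) (hmeet : ∀ K ∈ 𝒦, (B ∩ f '' (K ∩ closure A)).Nonempty) :
    closure A ⊆ f ⁻¹' B := by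
  have hC : f ⁻¹' B ∩ closure A = closure A := by
    refine hmin _ ((hB.preimage hf).inter isClosed_closure) inter_subset_right fun K hK => ?_
    obtain ⟨_, hxB, x, ⟨hxK, hxA⟩, rfl⟩ := hmeet K hK
    exact ⟨x, ⟨hxB, hxA⟩, hxK⟩
  exact hC ▸ inter_subset_left

end Rudin

theorem stmt_5_general {α β : Type u} [TopologicalSpace α]
    [TopologicalSpace β]
    (f : α → β) (hf : Continuous f) (A : Set α) (hA : IsRudin A) :
    IsRudin (closure (f '' A)) := by
  obtain ⟨hAne, 𝒦, hK, h𝒦, hmeet, hmin⟩ := hA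
  have hne : ∀ K ∈ 𝒦, (f '' (K ∩ closure A)).Nonempty := fun K hK =>
    ((hmeet K hK).mono (inter_comm _ _).subset).image f
  have himage : f '' (closure A) ⊆ closure (f '' A) := image_closure_subset_closure_image hf
  refine ⟨(hAne.image f).closure, (fun K => nhdsKer (f '' (K ∩ closure A))) '' 𝒦, ?_,
    h𝒦.image fun _ _ h => nhdsKer_mono (image_mono (inter_subset_inter_left _ h)), ?_, ?_⟩
  · rintro _ ⟨K, hK𝒦, rfl⟩
    exact isKSet_nhdsKer (hne K hK𝒦) (((hK K hK𝒦).2.1.inter_right isClosed_closure).image hf)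
  · rintro _ ⟨K, hK𝒦, rfl⟩
    rw [closure_closure, isClosed_closure.inter_nhdsKer_nonempty_iff]
    exact (hne K hK𝒦).mono (subset_inter ((image_mono inter_subset_right).trans himage) le_rfl)
  · intro B hB hBsub hBmeet
    rw [closure_closure] at hBsub ⊢
    have hA_B : closure A ⊆ f ⁻¹' B := closure_subset_preimage_of_minimal hf hmin hB
      fun K hK => hB.inter_nhdsKer_nonempty_iff.1 (hBmeet _ (mem_image_of_mem _ hK))
    exact hBsub.antisymm (closure_minimal (image_subset_iff.2 (subset_closure.trans hA_B)) hB)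

/-- continuous images of Rudin sets have Rudin closures. -/
theorem stmt_5 {α β : Type u} [TopologicalSpace α] [T0Space α]
    [TopologicalSpace β] [T0Space β]
    (f : α → β) (hf : Continuous f) (A : Set α) (hA : IsRudin A) :
    IsRudin (closure (f '' A)) :=
  stmt_5_general f hf A hA
end

section
/- For a T0 space X, the following are equivalent: (1) X is well-filtered; (2) for every closed well-filtered determined set A and every nonempty upper set K of X, A has a maximal element and ↓(A ∩ K) is closed; (3) for every closed Rudin set A and every nonempty upper set K, A has a maximal element and ↓(A ∩ K) is closed; (4) for every closed well-filtered determined set A and every nonempty compact saturated set K, A has a maximal element and ↓(A ∩ K) is closed; (5) for every closed Rudin set A and every nonempty compact saturated set K, A has a maximal element and ↓(A ∩ K) is closed. -/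
open Set

universe u

variable {α : Type u}

section Aux

variable [TopologicalSpace α]

lemma specLE_refl' (x : α) : specLE x x := subset_closure rfl

lemma closure_singleton_subset' {x : α} {C : Set α} (hC : IsClosed C) (hx : x ∈ C) :
    closure ({x} : Set α) ⊆ C :=
  closure_minimal (singleton_subset_iff.mpr hx) hC

lemma specLE_trans' {x y z : α} (h1 : specLE x y) (h2 : specLE y z) : specLE x z :=
  closure_singleton_subset' isClosed_closure h2 h1

lemma mem_of_closed_specLE {C : Set α} (hC : IsClosed C) {c z : α} (hc : c ∈ C)
    (h : specLE z c) : z ∈ C := closure_singleton_subset' hC hc h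

lemma specLE_antisymm' [T0Space α] {x y : α} (h1 : specLE x y) (h2 : specLE y x) : x = y :=
  ((specializes_iff_mem_closure.mpr h2).antisymm (specializes_iff_mem_closure.mpr h1)).eq

lemma isOpen_sUpper {U : Set α} (hU : IsOpen U) : SUpper U := by
  intro x y hx hxy
  by_contra hy
  exact mem_of_closed_specLE hU.isClosed_compl hy hxy hx

lemma isCompact_upSetOf {C : Set α} (hC : IsCompact C) : IsCompact (upSetOf C) := by
  refine isCompact_of_finite_subcover fun {ι} U hU hcov => ?_
  obtain ⟨t, ht⟩ := hC.elim_finite_subcover U hU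
    (fun x hx => hcov ⟨x, hx, specLE_refl' x⟩)
  refine ⟨t, fun y hy => ?_⟩
  obtain ⟨a, ha, hay⟩ := hy
  have h2 := ht ha
  simp only [mem_iUnion] at h2 ⊢
  obtain ⟨i, hit, hai⟩ := h2
  exact ⟨i, hit, isOpen_sUpper (hU i) hai hay⟩

lemma downOf_subset_closed {A : Set α} (hA : IsClosed A) {B : Set α} (hB : B ⊆ A) :
    downOf B ⊆ A := by
  rintro z ⟨b, hb, hzb⟩
  exact mem_of_closed_specLE hA (hB hb) hzb

/-- In a well-filtered space, every closed Rudin set is the closure of a point. -/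
lemma rudin_closure_point (hwf : IsWellFiltered α) {A : Set α} (hA : IsClosed A)
    (hR : IsRudin A) : ∃ x ∈ A, A = closure ({x} : Set α) := by
  obtain ⟨hne, 𝒦, hKs, hfil, hmeet, hmin⟩ := hR
  rw [hA.closure_eq] at hmeet hmin
  set 𝒦' : Set (Set α) := (fun K => upSetOf (A ∩ K)) '' 𝒦 with h𝒦'
  have hK' : ∀ K' ∈ 𝒦', IsKSet K' := by
    rintro _ ⟨K, hK, rfl⟩
    refine ⟨(hmeet K hK).mono (fun a ha => ⟨a, ha, specLE_refl' a⟩),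
      isCompact_upSetOf ((hKs K hK).2.1.inter_left hA), ?_⟩
    rintro x y ⟨a, ha, hax⟩ hxy
    exact ⟨a, ha, specLE_trans' hax hxy⟩
  have hfil' : FilteredFam 𝒦' := by
    refine ⟨hfil.1.image _, ?_⟩
    rintro _ ⟨K1, hK1, rfl⟩ _ ⟨K2, hK2, rfl⟩
    obtain ⟨K3, hK3, hsub⟩ := hfil.2 K1 hK1 K2 hK2
    refine ⟨_, mem_image_of_mem _ hK3, ?_⟩
    rintro y ⟨a, ⟨haA, haK3⟩, hay⟩
    exact ⟨⟨a, ⟨haA, (hsub haK3).1⟩, hay⟩, ⟨a, ⟨haA, (hsub haK3).2⟩, hay⟩⟩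
  have hx : (⋂₀ 𝒦' ∩ A).Nonempty := by
    by_contra h
    have hsub : ⋂₀ 𝒦' ⊆ Aᶜ := fun z hz hzA => h ⟨z, hz, hzA⟩
    obtain ⟨K', hK'm, hK'sub⟩ := hwf 𝒦' hK' hfil' Aᶜ hA.isOpen_compl hsub
    obtain ⟨K, hK, rfl⟩ := hK'm
    obtain ⟨a, haA, haK⟩ := hmeet K hK
    exact hK'sub ⟨a, ⟨haA, haK⟩, specLE_refl' a⟩ haA
  obtain ⟨x, hxI, hxA⟩ := hx
  refine ⟨x, hxA, (hmin (closure {x}) isClosed_closure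
    (closure_singleton_subset' hA hxA) ?_).symm⟩
  intro K hK
  obtain ⟨a, ⟨haA, haK⟩, hax⟩ := hxI _ (mem_image_of_mem _ hK)
  exact ⟨a, hax, haK⟩

/-- The key consequence: when a closed set equals `closure {x}`, both conclusions hold. -/
lemma point_case [T0Space α] {A : Set α} {x : α} (hx : x ∈ A)
    (hAx : A = closure ({x} : Set α)) {K : Set α} (hKup : SUpper K) :
    HasMaxElem A ∧ IsClosed (downOf (A ∩ K)) := by
  have hmem : ∀ a ∈ A, specLE a x := fun a ha => by rw [hAx] at ha; exact ha
  have hmax : HasMaxElem A := ⟨x, hx, fun a ha hxa => specLE_antisymm' (hmem a ha) hxa⟩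
  refine ⟨hmax, ?_⟩
  by_cases hxK : x ∈ K
  · have heq : downOf (A ∩ K) = A := by
      apply subset_antisymm
      · rintro z ⟨b, ⟨hbA, _⟩, hzb⟩
        rw [hAx]
        exact specLE_trans' hzb (hmem b hbA)
      · exact fun z hz => ⟨x, ⟨hx, hxK⟩, hmem z hz⟩
    rw [heq, hAx]
    exact isClosed_closure
  · have heq : downOf (A ∩ K) = ∅ := by
      ext z
      simp only [mem_empty_iff_false, iff_false]
      rintro ⟨b, ⟨hbA, hbK⟩, _⟩
      exact hxK (hKup hbK (hmem b hbA))
    rw [heq]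
    exact isClosed_empty

/-- Every Rudin set is well-filtered determined. -/
lemma isWFD_of_isRudin {A : Set α} (hR : IsRudin A) : IsWFD A := by
  intro Y _ _ hY f hf
  obtain ⟨hne, 𝒦, hKs, hfil, hmeet, hmin⟩ := hR
  have hRB : IsRudin (closure (f '' A)) := by
    refine ⟨hne.image f |>.mono subset_closure,
      (fun K => upSetOf (f '' (closure A ∩ K))) '' 𝒦, ?_, ?_, ?_, ?_⟩
    · rintro _ ⟨K, hK, rfl⟩
      refine ⟨((hmeet K hK).image f).mono (fun a ha => ⟨a, ha, specLE_refl' a⟩),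
        isCompact_upSetOf (((hKs K hK).2.1.inter_left isClosed_closure).image hf), ?_⟩
      rintro x y ⟨a, ha, hax⟩ hxy
      exact ⟨a, ha, specLE_trans' hax hxy⟩
    · refine ⟨hfil.1.image _, ?_⟩
      rintro _ ⟨K1, hK1, rfl⟩ _ ⟨K2, hK2, rfl⟩
      obtain ⟨K3, hK3, hsub⟩ := hfil.2 K1 hK1 K2 hK2
      refine ⟨_, mem_image_of_mem _ hK3, ?_⟩
      rintro y ⟨_, ⟨a, ⟨haA, haK3⟩, rfl⟩, hay⟩
      exact ⟨⟨f a, ⟨a, ⟨haA, (hsub haK3).1⟩, rfl⟩, hay⟩,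
        ⟨f a, ⟨a, ⟨haA, (hsub haK3).2⟩, rfl⟩, hay⟩⟩
    · rintro _ ⟨K, hK, rfl⟩
      obtain ⟨x, hxA, hxK⟩ := hmeet K hK
      refine ⟨f x, ?_, ⟨f x, mem_image_of_mem f ⟨hxA, hxK⟩, specLE_refl' _⟩⟩
      rw [closure_closure]
      exact image_closure_subset_closure_image hf (mem_image_of_mem f hxA)
    · intro B hB hBsub hBmeet
      rw [closure_closure] at hBsub ⊢
      have hC : f ⁻¹' B ∩ closure A = closure A := by
        refine hmin _ ((hB.preimage hf).inter isClosed_closure) inter_subset_right ?_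
        intro K hK
        obtain ⟨c, hcB, ⟨_, ⟨a, haAK, rfl⟩, hac⟩⟩ := hBmeet _ (mem_image_of_mem _ hK)
        exact ⟨a, ⟨mem_of_closed_specLE hB hcB hac, haAK.1⟩, haAK.2⟩
      have hsub2 : f '' A ⊆ B := by
        rintro _ ⟨a, haA, rfl⟩
        have : a ∈ f ⁻¹' B ∩ closure A := hC.symm ▸ subset_closure haA
        exact this.1
      exact subset_antisymm hBsub (closure_minimal hsub2 hB)
  obtain ⟨y, _, hBy⟩ := rudin_closure_point hY isClosed_closure hRB
  refine ⟨y, hBy, fun y' hy' => ?_⟩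
  have heq : closure ({y'} : Set Y) = closure ({y} : Set Y) := hy'.symm.trans hBy
  exact specLE_antisymm' (show y' ∈ closure ({y} : Set Y) by rw [← heq]; exact specLE_refl' y')
    (show y ∈ closure ({y'} : Set Y) by rw [heq]; exact specLE_refl' y)

/-- Statement (5) implies well-filteredness. -/
lemma wf_of_five [T0Space α]
    (h5 : ∀ A K : Set α, IsClosed A → IsRudin A → IsKSet K →
      HasMaxElem A ∧ IsClosed (downOf (A ∩ K))) : IsWellFiltered α := by
  classical
  intro 𝒦 hKs hfil U hU hsub
  by_contra hcon
  push_neg at hcon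
  have hmeet0 : ∀ K ∈ 𝒦, (Uᶜ ∩ K).Nonempty := by
    intro K hK
    obtain ⟨x, hxK, hxU⟩ := not_subset.mp (hcon K hK)
    exact ⟨x, hxU, hxK⟩
  set S : Set (Set α) := {C | IsClosed C ∧ C ⊆ Uᶜ ∧ ∀ K ∈ 𝒦, (C ∩ K).Nonempty} with hS
  have hzorn : ∀ c ⊆ S, IsChain (· ⊆ ·) c → ∃ lb ∈ S, ∀ s ∈ c, lb ⊆ s := by
    intro c hcS hchain
    rcases c.eq_empty_or_nonempty with rfl | hcne
    · exact ⟨Uᶜ, ⟨hU.isClosed_compl, Subset.rfl, hmeet0⟩, by simp⟩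
    · have hlb : ∀ u : Finset (Set α), ↑u ⊆ c → ∃ C0 ∈ c, ∀ C ∈ u, C0 ⊆ C := by
        intro u
        induction u using Finset.induction_on with
        | empty =>
          exact fun _ => ⟨hcne.choose, hcne.choose_spec, fun C hC => absurd hC (by simp)⟩
        | @insert D u hD ih =>
          intro hu
          have hDc : D ∈ c := hu (Finset.mem_insert_self D u)
          obtain ⟨C0, hC0c, hC0⟩ :=
            ih (fun x hx => hu (Finset.mem_insert_of_mem hx))
          rcases hchain.total hDc hC0c with h | h
          · refine ⟨D, hDc, fun C hC => ?_⟩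
            rcases Finset.mem_insert.mp hC with rfl | hC
            · exact Subset.rfl
            · exact h.trans (hC0 C hC)
          · refine ⟨C0, hC0c, fun C hC => ?_⟩
            rcases Finset.mem_insert.mp hC with rfl | hC
            · exact h
            · exact hC0 C hC
      refine ⟨⋂₀ c, ⟨isClosed_sInter (fun C hC => (hcS hC).1), ?_, ?_⟩,
        fun s hs => sInter_subset_of_mem hs⟩
      · obtain ⟨C0, hC0⟩ := hcne
        exact (sInter_subset_of_mem hC0).trans (hcS hC0).2.1
      · intro K hK
        have hne2 := (hKs K hK).2.1.inter_iInter_nonempty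
          (ι := c) (fun C => (C : Set α)) (fun C => (hcS C.2).1) ?_
        · obtain ⟨z, hzK, hz⟩ := hne2
          simp only [mem_iInter] at hz
          exact ⟨z, fun C hC => hz ⟨C, hC⟩, hzK⟩
        · intro u
          obtain ⟨C0, hC0c, hC0⟩ := hlb (u.image (fun C : c => (C : Set α)))
            (by rintro x hx
                simp only [Finset.coe_image, mem_image] at hx
                obtain ⟨C, _, rfl⟩ := hx
                exact C.2)
          obtain ⟨a, haC0, haK⟩ := (hcS hC0c).2.2 K hK
          refine ⟨a, haK, ?_⟩
          simp only [mem_iInter]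
          intro C hC
          exact hC0 _ (Finset.mem_image_of_mem _ hC) haC0
  obtain ⟨A, hAmin⟩ := zorn_superset S hzorn
  obtain ⟨⟨hAcl, hAU, hAmeet⟩, hAmin2⟩ := hAmin
  obtain ⟨K0, hK0⟩ := hfil.1
  have hAne : A.Nonempty := (hAmeet K0 hK0).mono inter_subset_left
  have hARudin : IsRudin A := by
    refine ⟨hAne, 𝒦, hKs, hfil, ?_, ?_⟩
    · rw [hAcl.closure_eq]; exact hAmeet
    · rw [hAcl.closure_eq]
      intro B hB hBA hBmeet
      exact subset_antisymm hBA (hAmin2 ⟨hB, hBA.trans hAU, hBmeet⟩ hBA)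
  have hdown : ∀ K ∈ 𝒦, downOf (A ∩ K) = A := by
    intro K hK
    have hcl := (h5 A K hAcl hARudin (hKs K hK)).2
    have hsubA : downOf (A ∩ K) ⊆ A := downOf_subset_closed hAcl inter_subset_left
    have hmem : downOf (A ∩ K) ∈ S := by
      refine ⟨hcl, hsubA.trans hAU, ?_⟩
      intro K' hK'
      obtain ⟨K3, hK3, hsub3⟩ := hfil.2 K hK K' hK'
      obtain ⟨a, haA, haK3⟩ := hAmeet K3 hK3
      exact ⟨a, ⟨a, ⟨haA, (hsub3 haK3).1⟩, specLE_refl' a⟩, (hsub3 haK3).2⟩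
    exact subset_antisymm hsubA (hAmin2 hmem hsubA)
  obtain ⟨m, hmA, hmmax⟩ := (h5 A K0 hAcl hARudin (hKs K0 hK0)).1
  have hmK : ∀ K ∈ 𝒦, m ∈ K := by
    intro K hK
    have hm : m ∈ downOf (A ∩ K) := (hdown K hK).symm ▸ hmA
    obtain ⟨a, ⟨haA, haK⟩, hma⟩ := hm
    rw [← hmmax a haA hma]
    exact haK
  exact hAU hmA (hsub (mem_sInter.mpr hmK))

end Aux

/-- characterizations of well-filtered spaces via maximal elements and
closedness of `↓(A ∩ K)`. -/
theorem stmt_13 (α : Type u) [TopologicalSpace α] [T0Space α] :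
    List.TFAE
      [ IsWellFiltered α,
        ∀ A K : Set α, IsClosed A → IsWFD A → K.Nonempty → SUpper K →
          HasMaxElem A ∧ IsClosed (downOf (A ∩ K)),
        ∀ A K : Set α, IsClosed A → IsRudin A → K.Nonempty → SUpper K →
          HasMaxElem A ∧ IsClosed (downOf (A ∩ K)),
        ∀ A K : Set α, IsClosed A → IsWFD A → IsKSet K →
          HasMaxElem A ∧ IsClosed (downOf (A ∩ K)),
        ∀ A K : Set α, IsClosed A → IsRudin A → IsKSet K →
          HasMaxElem A ∧ IsClosed (downOf (A ∩ K)) ] := by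
  tfae_have 1 → 2 := by
    intro h1 A K hA hWFD hKne hKup
    obtain ⟨y, hy, -⟩ := hWFD α h1 id continuous_id
    rw [image_id, hA.closure_eq] at hy
    exact point_case (show y ∈ A by rw [hy]; exact subset_closure rfl) hy hKup
  tfae_have 1 → 3 := by
    intro h1 A K hA hR hKne hKup
    obtain ⟨x, hx, hAx⟩ := rudin_closure_point h1 hA hR
    exact point_case hx hAx hKup
  tfae_have 2 → 4 := fun h2 A K hA hWFD hK => h2 A K hA hWFD hK.1 hK.2.2
  tfae_have 3 → 5 := fun h3 A K hA hR hK => h3 A K hA hR hK.1 hK.2.2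
  tfae_have 4 → 5 := fun h4 A K hA hR hK => h4 A K hA (isWFD_of_isRudin hR) hK
  tfae_have 5 → 1 := fun h5 => wf_of_five h5
  tfae_finish
end
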